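/- Under condition (Hf): lim_{δ→0} sup over Borel sets C ⊂ ℝ^{d'} and over z₁, z₂ ∈ H with |z₁ − z₂| ≤ δ of |r(C,z₁) − r(C,z₂)| = 0, and likewise lim_{δ→0} sup over Borel sets C and z₁, z₂ ∈ H with |z₁ − z₂| ≤ δ of |σ²(C,z₁) − σ²(C,z₂)| = 0. -/
import Mathlib


open MeasureTheory ProbabilityTheory Filter Set ENNReal

noncomputable section

/-- A class `𝒞` of subsets of `α` *shatters* the finite set `s` if every subset of `s`
is picked out by some member of `𝒞`. -/
def ShattersSet {α : Type*} (𝒞 : Set (Set α)) (s : Finset α) : Prop :=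
  ∀ t ⊆ s, ∃ C ∈ 𝒞, ∀ x ∈ s, (x ∈ C ↔ x ∈ t)

/-- `𝒞` is a VC class of sets: for some `m`, no `m`-point set is shattered by `𝒞`. -/
def IsVCClass {α : Type*} (𝒞 : Set (Set α)) : Prop :=
  ∃ m : ℕ, ∀ s : Finset α, s.card = m → ¬ ShattersSet 𝒞 s

/-- The class of subgraphs `{(y,t) : t < g y}` of a class of real-valued functions. -/
def subgraphClass {α : Type*} (𝒢 : Set (α → ℝ)) : Set (Set (α × ℝ)) :=
  (fun g => {p : α × ℝ | p.2 < g p.1}) '' 𝒢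

/-- A class of real-valued functions is a VC subgraph class if its subgraphs form a
VC class of sets. -/
def IsVCSubgraphClass {α : Type*} (𝒢 : Set (α → ℝ)) : Prop :=
  IsVCClass (subgraphClass 𝒢)

/-- Pointwise separability: a countable subclass approximates every member pointwise. -/
def PointwiseSeparable {α : Type*} (𝒢 : Set (α → ℝ)) : Prop :=
  ∃ 𝒢₀ : Set (α → ℝ), 𝒢₀ ⊆ 𝒢 ∧ 𝒢₀.Countable ∧
    ∀ g ∈ 𝒢, ∃ u : ℕ → (α → ℝ), (∀ n, u n ∈ 𝒢₀) ∧
      ∀ x, Tendsto (fun n => u n x) atTop (nhds (g x))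

/-- Bounded variation (along monotone chains) for a function on a preordered space. -/
def HasBddVariation {E : Type*} [Preorder E] (K : E → ℝ) : Prop :=
  ∃ M : ℝ, ∀ n : ℕ, ∀ c : ℕ → E, (∀ i, i < n → c i ≤ c (i + 1)) →
    ∑ i ∈ Finset.range n, |K (c (i + 1)) - K (c i)| ≤ M

/-- Conditions (HK1)–(HK3) on the kernel `K` : bounded variation, the dilations/translations
class `{K(λ·−z)}` is a VC subgraph class, support in `[−1/2,1/2]^d`, and `∫ K = 1`. -/
def KernelHyp (d : ℕ) (K : (Fin d → ℝ) → ℝ) : Prop :=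
  Measurable K ∧ HasBddVariation K ∧
  IsVCSubgraphClass {g : (Fin d → ℝ) → ℝ |
    ∃ lam : ℝ, 0 < lam ∧ ∃ z : Fin d → ℝ, g = fun s => K (lam • s - z)} ∧
  (∀ s : Fin d → ℝ, s ∉ Set.Icc (fun _ => -(1/2 : ℝ)) (fun _ => (1/2 : ℝ)) → K s = 0) ∧
  (∫ s, K s) = 1

/-- Condition (HV) on a bandwidth sequence, with integrability exponent `p ∈ (2,∞]`. -/
def HV (d : ℕ) (p : ℝ≥0∞) (h : ℕ → ℝ) : Prop :=
  (∀ n, 0 < h n) ∧ Antitone h ∧ Tendsto h atTop (nhds 0) ∧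
  Monotone (fun n : ℕ => (n : ℝ) * h n ^ d) ∧
  Tendsto (fun n : ℕ => (n : ℝ) * h n ^ d) atTop atTop ∧
  Tendsto (fun n : ℕ => Real.log (1 / h n) / Real.log (Real.log (n : ℝ))) atTop atTop ∧
  Tendsto (fun n : ℕ => h n ^ d * ((n : ℝ) / Real.log (1 / h n)) ^ (1 - 2 / p).toReal)
    atTop atTop

/-- Condition (HV') on a pair of bandwidth sequences `h_n ≤ 𝔥_n`. -/
def HV' (d : ℕ) (h 𝔥 : ℕ → ℝ) : Prop :=
  (∀ n, 0 < h n) ∧ (∀ n, 0 < 𝔥 n) ∧ (∀ n, h n ≤ 𝔥 n) ∧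
  Antitone h ∧ Tendsto h atTop (nhds 0) ∧
  Monotone (fun n : ℕ => (n : ℝ) * h n ^ d) ∧
  Tendsto (fun n : ℕ => (n : ℝ) * h n ^ d) atTop atTop ∧
  Tendsto (fun n : ℕ => Real.log (1 / h n) / Real.log (Real.log (n : ℝ))) atTop atTop ∧
  Tendsto (fun n : ℕ => (n : ℝ) * h n ^ d / Real.log (1 / 𝔥 n)) atTop atTop

/-- The indicator function `1_C` with real values. -/
def indC {α : Type*} (C : Set α) (y : α) : ℝ := C.indicator (fun _ => 1) y

/-- The centring parameter `m(C,h,z) = E(1_C(Y) K((Z−z)/h)) / E(K((Z−z)/h))`. -/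
def mPar {Ω : Type*} [MeasurableSpace Ω] (P : Measure Ω) {d d' : ℕ}
    (Y : Ω → Fin d' → ℝ) (Z : Ω → Fin d → ℝ) (K : (Fin d → ℝ) → ℝ)
    (C : Set (Fin d' → ℝ)) (h : ℝ) (z : Fin d → ℝ) : ℝ :=
  (∫ ω, indC C (Y ω) * K (fun j => (Z ω j - z j) / h) ∂P) /
    ∫ ω, K (fun j => (Z ω j - z j) / h) ∂P

/-- The conditional probability `r(C,z) = ∫_C f(y,z) dy / f_Z(z)`. -/
def rC {d d' : ℕ} (f : (Fin d' → ℝ) → (Fin d → ℝ) → ℝ)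
    (C : Set (Fin d' → ℝ)) (z : Fin d → ℝ) : ℝ :=
  (∫ y in C, f y z) / ∫ y, f y z

/-- The empirical likelihood ratio `ℛ_n` for the weights `w_1, …, w_n`:
`sup { Π np_i : p_i ≥ 0, Σ p_i = 1, Σ p_i w_i = 0 }`. -/
def ELratio (n : ℕ) (w : ℕ → ℝ) : ℝ :=
  sSup {r : ℝ | ∃ pp : ℕ → ℝ, (∀ i ∈ Finset.range n, 0 ≤ pp i) ∧
    (∑ i ∈ Finset.range n, pp i) = 1 ∧ (∑ i ∈ Finset.range n, pp i * w i) = 0 ∧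
    r = ∏ i ∈ Finset.range n, ((n : ℝ) * pp i)}

section Aux
variable {d d' : ℕ}

private lemma abs_sub_eq_aux (a b : ℝ) : |a - b| = 2 * max (b - a) 0 + (a - b) := by
  rcases le_total a b with h | h
  · rw [abs_of_nonpos (by linarith), max_eq_left (by linarith)]; ring
  · rw [abs_of_nonneg (by linarith), max_eq_right (by linarith)]; ring

private lemma meas_aux (f : (Fin d' → ℝ) → (Fin d → ℝ) → ℝ)
    (hfmeas : Measurable (Function.uncurry f)) (z : Fin d → ℝ) :
    Measurable (fun y => f y z) :=
  hfmeas.comp (measurable_id.prodMk measurable_const)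

private lemma integrable_aux (f : (Fin d' → ℝ) → (Fin d → ℝ) → ℝ)
    {a : ℝ} (ha : 0 < a) {z : Fin d → ℝ} (haz : a ≤ ∫ y, f y z) :
    Integrable (fun y => f y z) := by
  by_contra h
  rw [integral_undef h] at haz
  linarith

/-- Scheffé-type lemma: L¹ continuity of the conditional densities. -/
private lemma scheffe_aux
    (f : (Fin d' → ℝ) → (Fin d → ℝ) → ℝ)
    (hfnonneg : ∀ y z, 0 ≤ f y z) (hfmeas : Measurable (Function.uncurry f))
    (O' : Set (Fin d → ℝ)) (hO' : IsOpen O')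
    (hfcont : ContinuousOn (fun q : (Fin d' → ℝ) × (Fin d → ℝ) => f q.1 q.2) (Set.univ ×ˢ O'))
    (hfZcont : ContinuousOn (fun z => ∫ y, f y z) O')
    {a : ℝ} (ha : 0 < a) (hab : ∀ z ∈ O', a ≤ ∫ y, f y z)
    {w : Fin d → ℝ} (hw : w ∈ O') :
    Tendsto (fun z => ∫ y, |f y z / (∫ y', f y' z) - f y w / (∫ y', f y' w)|)
      (nhdsWithin w O') (nhds 0) := by
  set c : (Fin d → ℝ) → ℝ := fun z => ∫ y, f y z with hc
  have hcpos : ∀ z ∈ O', 0 < c z := fun z hz => lt_of_lt_of_le ha (hab z hz)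
  have hint : ∀ z ∈ O', Integrable (fun y => f y z) := fun z hz => integrable_aux f ha (hab z hz)
  have hgint : ∀ z ∈ O', Integrable (fun y => f y z / c z) := fun z hz => (hint z hz).div_const _
  have hgval : ∀ z ∈ O', (∫ y, f y z / c z) = 1 := by
    intro z hz
    rw [integral_div]
    exact div_self (hcpos z hz).ne'
  -- pointwise convergence of g
  have hptc : ∀ y, Tendsto (fun z => f y z / c z) (nhdsWithin w O') (nhds (f y w / c w)) := by
    intro y
    apply Filter.Tendsto.div
    · have h1 : ContinuousAt (fun q : (Fin d' → ℝ) × (Fin d → ℝ) => f q.1 q.2) (y, w) :=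
        hfcont.continuousAt ((isOpen_univ.prod hO').mem_nhds (by simp [hw]))
      have h2 : Tendsto (fun z => ((y, z) : (Fin d' → ℝ) × (Fin d → ℝ)))
          (nhdsWithin w O') (nhds (y, w)) :=
        ((continuous_const.prodMk continuous_id).tendsto w).mono_left nhdsWithin_le_nhds
      exact h1.tendsto.comp h2
    · exact hfZcont w hw
    · exact (hcpos w hw).ne'
  -- DCT for the positive part
  have key : Tendsto (fun z => ∫ y, max (f y w / c w - f y z / c z) 0)
      (nhdsWithin w O') (nhds 0) := by
    have key' : Tendsto (fun z => ∫ y, max (f y w / c w - f y z / c z) 0)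
        (nhdsWithin w O') (nhds (∫ (_ : Fin d' → ℝ), (0:ℝ))) := by
      apply tendsto_integral_filter_of_dominated_convergence (fun y => f y w / c w)
      · filter_upwards [self_mem_nhdsWithin] with z _
        exact ((((meas_aux f hfmeas w).div_const _).sub
        ((meas_aux f hfmeas z).div_const _)).max measurable_const).aestronglyMeasurable
      · filter_upwards [self_mem_nhdsWithin] with z hz
        refine Eventually.of_forall fun y => ?_
        have h1 : 0 ≤ f y z / c z := div_nonneg (hfnonneg y z) (hcpos z hz).le
        have h2 : 0 ≤ f y w / c w := div_nonneg (hfnonneg y w) (hcpos w hw).le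
        rw [Real.norm_eq_abs, abs_of_nonneg (le_max_right _ _)]
        exact max_le (by linarith) h2
      · exact hgint w hw
      · refine Eventually.of_forall fun y => ?_
        have hh := Filter.Tendsto.max
          ((tendsto_const_nhds : Tendsto (fun _ : Fin d → ℝ => f y w / c w)
            (nhdsWithin w O') (nhds (f y w / c w))).sub (hptc y))
          (tendsto_const_nhds : Tendsto (fun _ : Fin d → ℝ => (0:ℝ)) (nhdsWithin w O') (nhds 0))
        simpa using hh
    simpa using key'
  -- eventual equality with 2 * positive part
  have heq : ∀ z ∈ O', (∫ y, |f y z / c z - f y w / c w|) =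
      2 * ∫ y, max (f y w / c w - f y z / c z) 0 := by
    intro z hz
    have hmax : Integrable (fun y => max (f y w / c w - f y z / c z) 0) :=
      ((hgint w hw).sub (hgint z hz)).pos_part
    have hsub : Integrable (fun y => f y z / c z - f y w / c w) :=
      (hgint z hz).sub (hgint w hw)
    calc (∫ y, |f y z / c z - f y w / c w|)
        = ∫ y, (2 * max (f y w / c w - f y z / c z) 0 + (f y z / c z - f y w / c w)) := by
          congr 1; funext y; exact abs_sub_eq_aux _ _
      _ = 2 * (∫ y, max (f y w / c w - f y z / c z) 0)
            + ((∫ y, f y z / c z) - ∫ y, f y w / c w) := by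
          rw [integral_add (hmax.const_mul 2) hsub, integral_const_mul 2,
            integral_sub (hgint z hz) (hgint w hw)]
      _ = 2 * ∫ y, max (f y w / c w - f y z / c z) 0 := by
          rw [hgval z hz, hgval w hw]; ring
  have : Tendsto (fun z => 2 * ∫ y, max (f y w / c w - f y z / c z) 0)
      (nhdsWithin w O') (nhds 0) := by simpa using key.const_mul 2
  refine this.congr' ?_
  filter_upwards [self_mem_nhdsWithin] with z hz
  exact (heq z hz).symm

end Aux

section Aux2
variable {d d' : ℕ}

private lemma phi_cont_aux
    (f : (Fin d' → ℝ) → (Fin d → ℝ) → ℝ)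
    (hfnonneg : ∀ y z, 0 ≤ f y z) (hfmeas : Measurable (Function.uncurry f))
    (O' : Set (Fin d → ℝ)) (hO' : IsOpen O')
    (hfcont : ContinuousOn (fun q : (Fin d' → ℝ) × (Fin d → ℝ) => f q.1 q.2) (Set.univ ×ˢ O'))
    (hfZcont : ContinuousOn (fun z => ∫ y, f y z) O')
    {a : ℝ} (ha : 0 < a) (hab : ∀ z ∈ O', a ≤ ∫ y, f y z) :
    ContinuousOn (fun p : (Fin d → ℝ) × (Fin d → ℝ) =>
      ∫ y, |f y p.1 / (∫ y', f y' p.1) - f y p.2 / (∫ y', f y' p.2)|) (O' ×ˢ O') := by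
  set c : (Fin d → ℝ) → ℝ := fun z => ∫ y, f y z with hc
  have hgint : ∀ z ∈ O', Integrable (fun y => f y z / c z) := fun z hz =>
    (integrable_aux f ha (hab z hz)).div_const _
  rintro ⟨w1, w2⟩ ⟨hw1, hw2⟩
  have hD1 := scheffe_aux f hfnonneg hfmeas O' hO' hfcont hfZcont ha hab hw1
  have hD2 := scheffe_aux f hfnonneg hfmeas O' hO' hfcont hfZcont ha hab hw2
  rw [ContinuousWithinAt, ← tendsto_sub_nhds_zero_iff]
  apply squeeze_zero_norm'
    (a := fun p : (Fin d → ℝ) × (Fin d → ℝ) =>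
      (∫ y, |f y p.1 / c p.1 - f y w1 / c w1|) + ∫ y, |f y p.2 / c p.2 - f y w2 / c w2|)
  · filter_upwards [self_mem_nhdsWithin] with p hp
    obtain ⟨hp1, hp2⟩ := hp
    have hu : Integrable (fun y => |f y p.1 / c p.1 - f y p.2 / c p.2|) :=
      ((hgint p.1 hp1).sub (hgint p.2 hp2)).abs
    have hv : Integrable (fun y => |f y w1 / c w1 - f y w2 / c w2|) :=
      ((hgint w1 hw1).sub (hgint w2 hw2)).abs
    have hA : Integrable (fun y => |f y p.1 / c p.1 - f y w1 / c w1|) :=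
      ((hgint p.1 hp1).sub (hgint w1 hw1)).abs
    have hB : Integrable (fun y => |f y p.2 / c p.2 - f y w2 / c w2|) :=
      ((hgint p.2 hp2).sub (hgint w2 hw2)).abs
    rw [Real.norm_eq_abs, ← integral_sub hu hv]
    have step1 : |∫ y, (|f y p.1 / c p.1 - f y p.2 / c p.2| - |f y w1 / c w1 - f y w2 / c w2|)|
        ≤ ∫ y, |(|f y p.1 / c p.1 - f y p.2 / c p.2| - |f y w1 / c w1 - f y w2 / c w2|)| := by
      simpa [Real.norm_eq_abs] using norm_integral_le_integral_norm
        (fun y => |f y p.1 / c p.1 - f y p.2 / c p.2| - |f y w1 / c w1 - f y w2 / c w2|)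
    have step2 : (∫ y, |(|f y p.1 / c p.1 - f y p.2 / c p.2| - |f y w1 / c w1 - f y w2 / c w2|)|)
        ≤ ∫ y, (|f y p.1 / c p.1 - f y w1 / c w1| + |f y p.2 / c p.2 - f y w2 / c w2|) := by
      refine integral_mono (hu.sub hv).abs (hA.add hB) fun y => ?_
      dsimp only
      calc abs (|f y p.1 / c p.1 - f y p.2 / c p.2| - |f y w1 / c w1 - f y w2 / c w2|)
          ≤ |(f y p.1 / c p.1 - f y p.2 / c p.2) - (f y w1 / c w1 - f y w2 / c w2)| :=
            abs_abs_sub_abs_le_abs_sub _ _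
        _ = |(f y p.1 / c p.1 - f y w1 / c w1) - (f y p.2 / c p.2 - f y w2 / c w2)| := by
            ring_nf
        _ ≤ |f y p.1 / c p.1 - f y w1 / c w1| + |f y p.2 / c p.2 - f y w2 / c w2| :=
            abs_sub _ _
    have step3 : (∫ y, (|f y p.1 / c p.1 - f y w1 / c w1| + |f y p.2 / c p.2 - f y w2 / c w2|))
        = (∫ y, |f y p.1 / c p.1 - f y w1 / c w1|) + ∫ y, |f y p.2 / c p.2 - f y w2 / c w2| :=
      integral_add hA hB
    linarith [step1, step2]
  · have t1 : Tendsto (fun p : (Fin d → ℝ) × (Fin d → ℝ) => p.1)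
        (nhdsWithin (w1, w2) (O' ×ˢ O')) (nhdsWithin w1 O') := by
      rw [nhdsWithin_prod_eq]; exact tendsto_fst
    have t2 : Tendsto (fun p : (Fin d → ℝ) × (Fin d → ℝ) => p.2)
        (nhdsWithin (w1, w2) (O' ×ˢ O')) (nhdsWithin w2 O') := by
      rw [nhdsWithin_prod_eq]; exact tendsto_snd
    have := (hD1.comp t1).add (hD2.comp t2)
    simpa using this

private lemma rC_le_phi_aux
    (f : (Fin d' → ℝ) → (Fin d → ℝ) → ℝ)
    (hfnonneg : ∀ y z, 0 ≤ f y z) (hfmeas : Measurable (Function.uncurry f))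
    {a : ℝ} (ha : 0 < a)
    {z1 z2 : Fin d → ℝ} (h1 : a ≤ ∫ y, f y z1) (h2 : a ≤ ∫ y, f y z2)
    (C : Set (Fin d' → ℝ)) :
    |rC f C z1 - rC f C z2| ≤ ∫ y, |f y z1 / (∫ y', f y' z1) - f y z2 / (∫ y', f y' z2)| := by
  set c : (Fin d → ℝ) → ℝ := fun z => ∫ y, f y z with hc
  have hg1 : Integrable (fun y => f y z1 / c z1) := (integrable_aux f ha h1).div_const _
  have hg2 : Integrable (fun y => f y z2 / c z2) := (integrable_aux f ha h2).div_const _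
  have hr : ∀ (z : Fin d → ℝ), rC f C z = ∫ y in C, f y z / c z := by
    intro z; rw [rC, integral_div]
  rw [hr z1, hr z2, ← integral_sub (hg1.integrableOn) (hg2.integrableOn)]
  calc |∫ y in C, (f y z1 / c z1 - f y z2 / c z2)|
      ≤ ∫ y in C, |f y z1 / c z1 - f y z2 / c z2| := by
        simpa [Real.norm_eq_abs] using
          norm_integral_le_integral_norm (μ := volume.restrict C)
            (fun y => f y z1 / c z1 - f y z2 / c z2)
    _ ≤ ∫ y, |f y z1 / c z1 - f y z2 / c z2| :=
        setIntegral_le_integral (hg1.sub hg2).abs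
          (Eventually.of_forall fun y => abs_nonneg _)

private lemma rC_mem_aux
    (f : (Fin d' → ℝ) → (Fin d → ℝ) → ℝ)
    (hfnonneg : ∀ y z, 0 ≤ f y z) (hfmeas : Measurable (Function.uncurry f))
    {a : ℝ} (ha : 0 < a)
    {z : Fin d → ℝ} (h1 : a ≤ ∫ y, f y z) (C : Set (Fin d' → ℝ)) :
    0 ≤ rC f C z ∧ rC f C z ≤ 1 := by
  have hint := integrable_aux f ha h1
  have hcpos : (0:ℝ) < ∫ y, f y z := lt_of_lt_of_le ha h1
  constructor
  · exact div_nonneg (integral_nonneg fun y => hfnonneg y z) hcpos.le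
  · rw [rC, div_le_one hcpos]
    exact setIntegral_le_integral hint (Eventually.of_forall fun y => hfnonneg y z)

end Aux2

section Main
variable {d d' : ℕ}

private lemma key_aux
    (H : Set (Fin d → ℝ))
    (Phi : (Fin d → ℝ) → (Fin d → ℝ) → ℝ)
    (huc : ∀ ε > 0, ∃ δ0 > 0, ∀ z1 ∈ H, ∀ z2 ∈ H, dist z1 z2 < δ0 → Phi z1 z2 < ε)
    (T : {C : Set (Fin d' → ℝ) // MeasurableSet C} → (Fin d → ℝ) → (Fin d → ℝ) → ℝ)
    (hT0 : ∀ C z1 z2, 0 ≤ T C z1 z2)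
    (hTb : ∀ C z1 z2, z1 ∈ H → z2 ∈ H → T C z1 z2 ≤ Phi z1 z2) :
    Tendsto (fun δ : ℝ => ⨆ C : {C : Set (Fin d' → ℝ) // MeasurableSet C},
        ⨆ zp : {pr : (Fin d → ℝ) × (Fin d → ℝ) // pr.1 ∈ H ∧ pr.2 ∈ H ∧ ‖pr.1 - pr.2‖ ≤ δ},
          T C zp.1.1 zp.1.2) (nhdsWithin 0 (Set.Ioi 0)) (nhds 0) := by
  rw [Metric.tendsto_nhdsWithin_nhds]
  intro ε hε
  obtain ⟨δ0, hδ0, hδ⟩ := huc (ε/2) (by linarith)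
  refine ⟨δ0, hδ0, fun δ hδmem hδlt => ?_⟩
  have hδpos : (0:ℝ) < δ := hδmem
  have hδlt' : δ < δ0 := by
    rw [Real.dist_eq, sub_zero, abs_of_pos hδpos] at hδlt; exact hδlt
  have hle : (⨆ C : {C : Set (Fin d' → ℝ) // MeasurableSet C},
      ⨆ zp : {pr : (Fin d → ℝ) × (Fin d → ℝ) // pr.1 ∈ H ∧ pr.2 ∈ H ∧ ‖pr.1 - pr.2‖ ≤ δ},
        T C zp.1.1 zp.1.2) ≤ ε/2 := by
    refine Real.iSup_le (fun C => Real.iSup_le (fun zp => ?_) (by linarith)) (by linarith)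
    obtain ⟨⟨z1, z2⟩, hz1, hz2, hzd⟩ := zp
    have hdlt : dist z1 z2 < δ0 := by
      rw [dist_eq_norm]; exact lt_of_le_of_lt hzd hδlt'
    exact (hTb C z1 z2 hz1 hz2).trans (hδ z1 hz1 z2 hz2 hdlt).le
  have hge : (0:ℝ) ≤ ⨆ C : {C : Set (Fin d' → ℝ) // MeasurableSet C},
      ⨆ zp : {pr : (Fin d → ℝ) × (Fin d → ℝ) // pr.1 ∈ H ∧ pr.2 ∈ H ∧ ‖pr.1 - pr.2‖ ≤ δ},
        T C zp.1.1 zp.1.2 :=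
    Real.iSup_nonneg fun C => Real.iSup_nonneg fun zp => hT0 _ _ _
  rw [Real.dist_eq, sub_zero, abs_of_nonneg hge]
  linarith


set_option maxHeartbeats 1000000 in
/-- uniform equicontinuity of `r(C,·)` and `σ²(C,·)`. Under (Hf),
`sup_{C Borel} sup_{z₁,z₂∈H, |z₁−z₂|≤δ} |r(C,z₁) − r(C,z₂)| → 0` as `δ → 0⁺`, and likewise
for `σ²(C,·)`. -/
theorem stmt_13
    {Ω : Type*} [MeasurableSpace Ω] (P : Measure Ω) [IsProbabilityMeasure P]
    (d d' : ℕ) (hd : 1 ≤ d) (hd' : 1 ≤ d')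
    (Y : Ω → Fin d' → ℝ) (Z : Ω → Fin d → ℝ) (hY : Measurable Y) (hZ : Measurable Z)
    -- the compact set H and the open set O' ⊃ H
    (H : Set (Fin d → ℝ)) (hHcomp : IsCompact H) (hHint : (interior H).Nonempty)
    (O' : Set (Fin d → ℝ)) (hO' : IsOpen O') (hHO' : H ⊆ O')
    -- condition (Hf)
    (f : (Fin d' → ℝ) → (Fin d → ℝ) → ℝ)
    (hfnonneg : ∀ y z, 0 ≤ f y z) (hfmeas : Measurable (Function.uncurry f))
    (hlaw : Measure.map (fun ω => (Y ω, Z ω)) P =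
      (volume : Measure ((Fin d' → ℝ) × (Fin d → ℝ))).withDensity
        (fun q => ENNReal.ofReal (f q.1 q.2)))
    (hfcont : ContinuousOn (fun q : (Fin d' → ℝ) × (Fin d → ℝ) => f q.1 q.2) (Set.univ ×ˢ O'))
    (hfZcont : ContinuousOn (fun z => ∫ y, f y z) O')
    (hfZbdd : ∃ a b : ℝ, 0 < a ∧ ∀ z ∈ O', a ≤ (∫ y, f y z) ∧ (∫ y, f y z) ≤ b)
    : Tendsto (fun δ : ℝ => ⨆ C : {C : Set (Fin d' → ℝ) // MeasurableSet C},
        ⨆ zp : {pr : (Fin d → ℝ) × (Fin d → ℝ) // pr.1 ∈ H ∧ pr.2 ∈ H ∧ ‖pr.1 - pr.2‖ ≤ δ},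
          |rC f (C : Set (Fin d' → ℝ)) zp.1.1 - rC f (C : Set (Fin d' → ℝ)) zp.1.2|)
      (nhdsWithin 0 (Set.Ioi 0)) (nhds 0) ∧
      Tendsto (fun δ : ℝ => ⨆ C : {C : Set (Fin d' → ℝ) // MeasurableSet C},
        ⨆ zp : {pr : (Fin d → ℝ) × (Fin d → ℝ) // pr.1 ∈ H ∧ pr.2 ∈ H ∧ ‖pr.1 - pr.2‖ ≤ δ},
          |rC f (C : Set (Fin d' → ℝ)) zp.1.1 * (1 - rC f (C : Set (Fin d' → ℝ)) zp.1.1) -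
            rC f (C : Set (Fin d' → ℝ)) zp.1.2 * (1 - rC f (C : Set (Fin d' → ℝ)) zp.1.2)|)
      (nhdsWithin 0 (Set.Ioi 0)) (nhds 0) := by
  obtain ⟨a, b, ha, hab'⟩ := hfZbdd
  have hab : ∀ z ∈ O', a ≤ ∫ y, f y z := fun z hz => (hab' z hz).1
  set Phi : (Fin d → ℝ) → (Fin d → ℝ) → ℝ := fun z1 z2 =>
    ∫ y, |f y z1 / (∫ y', f y' z1) - f y z2 / (∫ y', f y' z2)| with hPhi
  -- uniform smallness of Phi near the diagonal of H
  have huc : ∀ ε > 0, ∃ δ0 > 0, ∀ z1 ∈ H, ∀ z2 ∈ H, dist z1 z2 < δ0 → Phi z1 z2 < ε := by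
    have hcont : ContinuousOn (fun p : (Fin d → ℝ) × (Fin d → ℝ) => Phi p.1 p.2) (H ×ˢ H) :=
      (phi_cont_aux f hfnonneg hfmeas O' hO' hfcont hfZcont ha hab).mono
        (Set.prod_mono hHO' hHO')
    have hucOn := (hHcomp.prod hHcomp).uniformContinuousOn_of_continuous hcont
    rw [Metric.uniformContinuousOn_iff] at hucOn
    intro ε hε
    obtain ⟨δ0, hδ0, hh⟩ := hucOn ε hε
    refine ⟨δ0, hδ0, fun z1 hz1 z2 hz2 hdist => ?_⟩
    have hdd : dist ((z1, z2) : (Fin d → ℝ) × (Fin d → ℝ)) (z2, z2) < δ0 := by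
      rw [Prod.dist_eq]
      rw [dist_self]
      exact lt_of_le_of_lt (max_le le_rfl dist_nonneg) hdist
    have hval := hh (z1, z2) ⟨hz1, hz2⟩ (z2, z2) ⟨hz2, hz2⟩ hdd
    have hzero : Phi z2 z2 = 0 := by simp [hPhi]
    have hnn : 0 ≤ Phi z1 z2 := integral_nonneg fun y => abs_nonneg _
    rw [Real.dist_eq, hzero, sub_zero, abs_of_nonneg hnn] at hval
    exact hval
  have hrb : ∀ (C : Set (Fin d' → ℝ)), ∀ z1 ∈ H, ∀ z2 ∈ H,
      |rC f C z1 - rC f C z2| ≤ Phi z1 z2 := fun C z1 hz1 z2 hz2 =>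
    rC_le_phi_aux f hfnonneg hfmeas ha (hab z1 (hHO' hz1)) (hab z2 (hHO' hz2)) C
  constructor
  · have h := key_aux H Phi huc (fun C z1 z2 => |rC f C.1 z1 - rC f C.1 z2|)
      (fun C z1 z2 => abs_nonneg _)
      (fun C z1 z2 hz1 hz2 => hrb C.1 z1 hz1 z2 hz2)
    exact h
  · have h := key_aux H Phi huc
      (fun C z1 z2 => |rC f C.1 z1 * (1 - rC f C.1 z1) - rC f C.1 z2 * (1 - rC f C.1 z2)|)
      (fun C z1 z2 => abs_nonneg _)
      (fun C z1 z2 hz1 hz2 => ?_)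
    exact h
    obtain ⟨h10, h11⟩ := rC_mem_aux f hfnonneg hfmeas ha (hab z1 (hHO' hz1)) C.1
    obtain ⟨h20, h21⟩ := rC_mem_aux f hfnonneg hfmeas ha (hab z2 (hHO' hz2)) C.1
    set r1 := rC f C.1 z1
    set r2 := rC f C.1 z2
    have e : r1 * (1 - r1) - r2 * (1 - r2) = (r1 - r2) * (1 - (r1 + r2)) := by ring
    have h1r : |r1 * (1 - r1) - r2 * (1 - r2)| ≤ |r1 - r2| := by
      rw [e, abs_mul]
      have hb1 : |1 - (r1 + r2)| ≤ 1 := abs_le.mpr ⟨by linarith, by linarith⟩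
      nlinarith [abs_nonneg (r1 - r2)]
    exact h1r.trans (hrb C.1 z1 hz1 z2 hz2)
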